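/- arXiv:2506.19015 — 2 statements merged into one kernel-verified Lean document; each statement's English description precedes it below -/
import Mathlib

section
/- Normalization of the Dirichlet-process partition law: for every real number α and every finite set s with |s| = n, ∑_{P partition of s} α^{#P} · ∏_{B ∈ P} (|B| − 1)! = ∏_{i=0}^{n−1} (α + i), the ascending factorial α(α+1)⋯(α+n−1) (for n = 0 both sides equal 1). This identity expresses that Antoniak's Dirichlet-process-induced random partition law p(𝒫_n) = (Γ(α)/Γ(α+n)) · α^{M_n} · ∏_{j=1}^{M_n} Γ(n_j), used in the proof of the paper's Proposition 1, is a probability distribution over partitions of n items. -/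
/-!
Removing a point `x` from its block is a bijection from partitions of `insert x s` to pairs
consisting of a partition `P` of `s` and a choice of where `x` goes: into one of the blocks `B`
of `P`, or into a new singleton block. The weight `a ^ #P · ∏ (|B| - 1)!` gets multiplied by
`|B|` in the first case and by `a` in the second, and these factors sum to `a + |s|`. Induction
on `s` gives the ascending factorial.
-/

namespace Finpartition

section GeneralizedBooleanAlgebra

variable {α : Type*} [GeneralizedBooleanAlgebra α] [DecidableEq α] {a b : α}

theorem avoid_parts_of_mem_insert_bot (P : Finpartition a) (hb : b ∈ insert ⊥ P.parts) :
    (P.avoid b).parts = P.parts.erase b := by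
  have hdisj : ∀ d ∈ P.parts, d ≠ b → Disjoint d b := fun d hd hne => by
    rcases Finset.mem_insert.1 hb with rfl | hb
    · exact disjoint_bot_right
    · exact P.disjoint hd hb hne
  ext c
  simp only [mem_avoid, Finset.mem_erase]
  constructor
  · rintro ⟨d, hd, hdb, rfl⟩
    have hne : d ≠ b := by rintro rfl; exact hdb le_rfl
    rw [(hdisj d hd hne).sdiff_eq_left]
    exact ⟨hne, hd⟩
  · rintro ⟨hne, hc⟩
    exact ⟨c, hc, fun hcb => P.ne_bot hc ((hdisj c hc hne).eq_bot_of_le hcb),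
      (hdisj c hc hne).sdiff_eq_left⟩

end GeneralizedBooleanAlgebra

variable {α : Type*} [DecidableEq α] {s : Finset α} {x : α}

lemma notMem_parts_of_mem (hx : x ∉ s) (P : Finpartition s) {t : Finset α} (ht : x ∈ t) :
    t ∉ P.parts := fun h => hx (P.le h ht)

lemma notMem_of_mem_insert_empty_parts (hx : x ∉ s) (P : Finpartition s) {o : Finset α}
    (ho : o ∈ insert ∅ P.parts) : x ∉ o := by
  rcases Finset.mem_insert.1 ho with rfl | ho
  · exact Finset.notMem_empty x
  · exact fun h => notMem_parts_of_mem hx P h ho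

/-- The partition of `insert x s` obtained from `P` by adding `x` to the part `o`, or as a new
singleton part when `o = ∅`. -/
def insertInto (P : Finpartition s) (hx : x ∉ s) (o : Finset α) (ho : o ∈ insert ∅ P.parts) :
    Finpartition (insert x s) :=
  (P.avoid o).extend (Finset.insert_ne_empty x o)
    (Finset.disjoint_insert_right.2
      ⟨fun h => hx (Finset.sdiff_subset h), Finset.sdiff_disjoint⟩)
    (by
      have hos : o ⊆ s := by
        rcases Finset.mem_insert.1 ho with rfl | ho
        · exact Finset.empty_subset s
        · exact P.le ho
      rw [Finset.sup_eq_union, Finset.union_insert, Finset.sdiff_union_of_subset hos])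

lemma insertInto_parts (P : Finpartition s) (hx : x ∉ s) (o : Finset α)
    (ho : o ∈ insert ∅ P.parts) :
    (P.insertInto hx o ho).parts = insert (insert x o) (P.parts.erase o) := by
  rw [insertInto, extend_parts, avoid_parts_of_mem_insert_bot P ho]

lemma part_insertInto (P : Finpartition s) (hx : x ∉ s) (o : Finset α)
    (ho : o ∈ insert ∅ P.parts) : (P.insertInto hx o ho).part x = insert x o :=
  part_eq_of_mem _ (by rw [insertInto_parts]; exact Finset.mem_insert_self _ _)
    (Finset.mem_insert_self x o)

def eraseElem (Q : Finpartition (insert x s)) (hx : x ∉ s) : Finpartition s :=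
  (Q.avoid {x}).copy (by rw [Finset.sdiff_singleton_eq_erase, Finset.erase_insert hx])

lemma eraseElem_parts (Q : Finpartition (insert x s)) (hx : x ∉ s) :
    (Q.eraseElem hx).parts =
      (insert ((Q.part x).erase x) (Q.parts.erase (Q.part x))).erase ∅ := by
  have hxQ : Q.part x ∈ Q.parts := Q.part_mem.2 (Finset.mem_insert_self x s)
  have hother : ∀ d ∈ Q.parts.erase (Q.part x), d \ {x} = d := fun d hd => by
    obtain ⟨hne, hd⟩ := Finset.mem_erase.1 hd
    rw [Finset.sdiff_singleton_eq_erase,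
      Finset.erase_eq_of_notMem fun h => hne (Q.part_eq_of_mem hd h).symm]
  simp only [eraseElem, copy_parts, avoid, ofErase_parts, Finset.bot_eq_empty]
  conv_lhs => rw [← Finset.insert_erase hxQ]
  rw [Finset.image_insert, Finset.image_congr hother, Finset.image_id',
    Finset.sdiff_singleton_eq_erase]

lemma erase_part_mem_insert_empty_eraseElem_parts (Q : Finpartition (insert x s)) (hx : x ∉ s) :
    (Q.part x).erase x ∈ insert ∅ (Q.eraseElem hx).parts := by
  rw [eraseElem_parts]
  by_cases h : (Q.part x).erase x = ∅
  · rw [h]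
    exact Finset.mem_insert_self _ _
  · exact Finset.mem_insert_of_mem (Finset.mem_erase.2 ⟨h, Finset.mem_insert_self _ _⟩)

lemma insertInto_eraseElem (Q : Finpartition (insert x s)) (hx : x ∉ s) :
    (Q.eraseElem hx).insertInto hx _ (Q.erase_part_mem_insert_empty_eraseElem_parts hx) = Q := by
  have hxQ : Q.part x ∈ Q.parts := Q.part_mem.2 (Finset.mem_insert_self x s)
  have hxx : x ∈ Q.part x := Q.mem_part_self.2 (Finset.mem_insert_self x s)
  have ho : (Q.part x).erase x ∉ Q.parts.erase (Q.part x) := fun h => by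
    obtain ⟨hne, ho⟩ := Finset.mem_erase.1 h
    obtain ⟨y, hy⟩ := Q.nonempty_of_mem_parts ho
    exact hne (Q.eq_of_mem_parts ho hxQ hy (Finset.mem_of_mem_erase hy))
  ext1
  rw [insertInto_parts, eraseElem_parts, Finset.erase_right_comm, Finset.erase_insert ho,
    Finset.erase_eq_of_notMem (fun h => Q.empty_notMem_parts (Finset.mem_of_mem_erase h)),
    Finset.insert_erase hxx, Finset.insert_erase hxQ]

lemma eraseElem_insertInto (P : Finpartition s) (hx : x ∉ s) (o : Finset α)
    (ho : o ∈ insert ∅ P.parts) : (P.insertInto hx o ho).eraseElem hx = P := by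
  have hxo : x ∉ o := notMem_of_mem_insert_empty_parts hx P ho
  have hnew : insert x o ∉ P.parts.erase o := fun h =>
    notMem_parts_of_mem hx P (Finset.mem_insert_self x o) (Finset.mem_of_mem_erase h)
  ext1
  rw [eraseElem_parts, part_insertInto, Finset.erase_insert hxo, insertInto_parts,
    Finset.erase_insert hnew]
  rcases Finset.mem_insert.1 ho with rfl | ho
  · rw [Finset.erase_insert (Finset.notMem_erase _ _),
      Finset.erase_eq_of_notMem P.empty_notMem_parts]
  · rw [Finset.insert_erase ho, Finset.erase_eq_of_notMem P.empty_notMem_parts]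

def insertEquiv (hx : x ∉ s) :
    Finpartition (insert x s) ≃ Σ P : Finpartition s, (insert ∅ P.parts : Finset (Finset α)) where
  toFun Q := ⟨Q.eraseElem hx, _, Q.erase_part_mem_insert_empty_eraseElem_parts hx⟩
  invFun p := p.1.insertInto hx p.2 p.2.2
  left_inv Q := Q.insertInto_eraseElem hx
  right_inv := fun ⟨P, o, ho⟩ => Sigma.subtype_ext (P.eraseElem_insertInto hx o ho)
    (by
      dsimp only
      rw [part_insertInto, Finset.erase_insert (notMem_of_mem_insert_empty_parts hx P ho)])

variable {R : Type*} [CommSemiring R]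

def ewensWeight (a : R) (P : Finpartition s) : R :=
  a ^ P.parts.card * ∏ B ∈ P.parts, ((B.card - 1).factorial : R)

lemma ewensWeight_insertInto (a : R) (P : Finpartition s) (hx : x ∉ s) (o : Finset α)
    (ho : o ∈ insert ∅ P.parts) :
    (P.insertInto hx o ho).ewensWeight a =
      (if o = ∅ then a else (o.card : R)) * P.ewensWeight a := by
  have hnew : insert x o ∉ P.parts.erase o := fun h =>
    notMem_parts_of_mem hx P (Finset.mem_insert_self x o) (Finset.mem_of_mem_erase h)
  rw [ewensWeight, ewensWeight, insertInto_parts, Finset.card_insert_of_notMem hnew,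
    Finset.prod_insert hnew]
  rcases Finset.mem_insert.1 ho with rfl | ho
  · rw [if_pos rfl, Finset.erase_eq_of_notMem P.empty_notMem_parts]
    simp only [insert_empty_eq, Finset.card_singleton, Nat.sub_self, Nat.factorial_zero,
      Nat.cast_one, pow_succ]
    ring
  · have hxo : x ∉ o := notMem_of_mem_insert_empty_parts hx P (Finset.mem_insert_of_mem ho)
    rw [if_neg (P.ne_empty ho), Finset.card_insert_of_notMem hxo, Nat.add_sub_cancel,
      Finset.card_erase_add_one ho, ← Finset.mul_prod_erase P.parts _ ho,
      ← Nat.mul_factorial_pred (P.nonempty_of_mem_parts ho).card_ne_zero]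
    push_cast
    ring

theorem sum_ewensWeight_insert (a : R) (hx : x ∉ s) :
    ∑ Q : Finpartition (insert x s), Q.ewensWeight a =
      (a + s.card) * ∑ P : Finpartition s, P.ewensWeight a := by
  calc ∑ Q : Finpartition (insert x s), Q.ewensWeight a
      = ∑ p : Σ P : Finpartition s, (insert ∅ P.parts : Finset (Finset α)),
          ((insertEquiv hx).symm p).ewensWeight a := ((insertEquiv hx).symm.sum_comp _).symm
    _ = ∑ P : Finpartition s, ∑ o ∈ insert ∅ P.parts,
          (if o = ∅ then a else (o.card : R)) * P.ewensWeight a := by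
      rw [Fintype.sum_sigma]
      refine Fintype.sum_congr _ _ fun P => ?_
      rw [← Finset.sum_coe_sort (insert ∅ P.parts)]
      exact Fintype.sum_congr _ _ fun o => P.ewensWeight_insertInto a hx o o.2
    _ = ∑ P : Finpartition s, (a + s.card) * P.ewensWeight a := by
      refine Fintype.sum_congr _ _ fun P => ?_
      rw [Finset.sum_insert P.empty_notMem_parts, if_pos rfl,
        Finset.sum_congr rfl fun o ho => by rw [if_neg (P.ne_empty ho)], ← Finset.sum_mul,
        ← Nat.cast_sum, P.sum_card_parts, add_mul]
    _ = (a + s.card) * ∑ P : Finpartition s, P.ewensWeight a := (Finset.mul_sum ..).symm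

theorem sum_ewensWeight_eq_prod_range (a : R) (s : Finset α) :
    ∑ P : Finpartition s, P.ewensWeight a = ∏ i ∈ Finset.range s.card, (a + i) := by
  induction s using Finset.induction_on with
  | empty =>
    have : Unique (Finpartition (∅ : Finset α)) := inferInstanceAs (Unique (Finpartition ⊥))
    rw [Finset.card_empty, Finset.prod_range_zero, Fintype.sum_unique, ewensWeight,
      parts_eq_empty_iff.2 rfl, Finset.card_empty, pow_zero, Finset.prod_empty, mul_one]
  | insert x s hx ih =>
    rw [sum_ewensWeight_insert a hx, ih, Finset.card_insert_of_notMem hx, Finset.prod_range_succ,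
      mul_comm]

end Finpartition

/-- **Normalization of the Dirichlet-process partition law (Antoniak).**
For every real `a` and every finite set `s` with `n` elements,
`∑_{P partition of s} a^{#P} · ∏_{B ∈ P} (|B| − 1)! = a(a+1)⋯(a+n−1)`,
the ascending factorial (for `n = 0` both sides equal `1`).  This expresses that the
Dirichlet-process-induced random partition law
`p(𝒫_n) = (Γ(a)/Γ(a+n)) · a^{M_n} · ∏_j Γ(n_j)`, used in the proof of Proposition 1,
is a probability distribution over partitions of `n` items. -/
theorem dp_partition_normalization
    {α : Type*} [DecidableEq α]
    (a : ℝ) (s : Finset α) (n : ℕ) (hn : s.card = n) :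
    ∑ P : Finpartition s,
        a ^ P.parts.card * ∏ B ∈ P.parts, ((B.card - 1).factorial : ℝ) =
      ∏ i ∈ Finset.range n, (a + i) := by
  subst hn
  exact Finpartition.sum_ewensWeight_eq_prod_range a s
end

section
/- Almost-sure validity of random stick-breaking weights: if (v_k)_{k∈ℕ} are independent, identically distributed [0,1]-valued random variables with μ({v₀ > 0}) > 0, then for μ-almost every ω the stick-breaking weights sum to 1, i.e., HasSum (fun k => w k (ω)) 1. (This underlies the square-breaking representation of the enriched dependent Dirichlet process in the paper, where v_k^φ are i.i.d. Beta(1, α_φ) random variables, so that the random weights w_k^φ = v_k^φ ∏_{l<k}(1 − v_l^φ) almost surely form a probability vector.) -/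
/-!
Write `P n = ∏_{l < n} (1 - v l)` for the mass of the stick left after `n` breaks. The partial
sums of the weights telescope to `1 - P n`, so the weights sum to `1` exactly when `P n → 0`.
Since `μ(v₀ > 0) > 0`, some `ε > 0` has `μ(v₀ ≥ ε) > 0`; the events `{v k ≥ ε}` are independent
with a common positive probability, so by the second Borel–Cantelli lemma almost every `ω` lies
in infinitely many of them, and each such break shrinks the stick by a factor `1 - ε`.
-/

open MeasureTheory ProbabilityTheory Filter Finset Topology

def stickBreaking {R : Type*} [CommRing R] (v : ℕ → R) (k : ℕ) : R :=
  v k * ∏ l ∈ range k, (1 - v l)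

theorem sum_range_stickBreaking {R : Type*} [CommRing R] (v : ℕ → R) (n : ℕ) :
    ∑ k ∈ range n, stickBreaking v k = 1 - ∏ l ∈ range n, (1 - v l) := by
  induction n with
  | zero => simp
  | succ n ih =>
    rw [sum_range_succ, prod_range_succ, ih, stickBreaking]
    ring

section UnitInterval

variable {v : ℕ → ℝ} (hv0 : ∀ k, 0 ≤ v k) (hv1 : ∀ k, v k ≤ 1)
include hv0 hv1

theorem prod_range_one_sub_le_pow {ε : ℝ} {n : ℕ} {T : Finset ℕ} (hT : T ⊆ range n)
    (hε : ∀ k ∈ T, ε ≤ v k) : ∏ l ∈ range n, (1 - v l) ≤ (1 - ε) ^ T.card := by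
  have hnonneg : ∀ l, 0 ≤ 1 - v l := fun l => sub_nonneg.2 (hv1 l)
  calc ∏ l ∈ range n, (1 - v l)
      = (∏ l ∈ range n \ T, (1 - v l)) * ∏ l ∈ T, (1 - v l) := (prod_sdiff hT).symm
    _ ≤ 1 * ∏ l ∈ T, (1 - ε) := by
      gcongr ?_ * ?_
      · exact prod_nonneg fun l _ => hnonneg l
      · exact prod_le_one (fun l _ => hnonneg l) fun l _ => by linarith [hv0 l]
      · exact prod_le_prod (fun l _ => hnonneg l) fun l hl => by linarith [hε l hl]
    _ = (1 - ε) ^ T.card := by rw [one_mul, prod_const]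

theorem tendsto_prod_range_one_sub_of_frequently {ε : ℝ} (hε : 0 < ε)
    (hfreq : ∃ᶠ k in atTop, ε ≤ v k) :
    Tendsto (fun n => ∏ l ∈ range n, (1 - v l)) atTop (𝓝 0) := by
  obtain ⟨k, hk⟩ := hfreq.exists
  have hq : |1 - ε| < 1 := abs_lt.2 ⟨by linarith [hv1 k], by linarith⟩
  refine tendsto_order.2 ⟨fun δ hδ => Eventually.of_forall fun n =>
    hδ.trans_le (prod_nonneg fun l _ => sub_nonneg.2 (hv1 l)), fun δ hδ => ?_⟩
  obtain ⟨m, hm⟩ := ((tendsto_pow_atTop_nhds_zero_of_abs_lt_one hq).eventually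
    (gt_mem_nhds hδ)).exists
  obtain ⟨T, hT, rfl⟩ := (Nat.frequently_atTop_iff_infinite.1 hfreq).exists_subset_card_eq m
  obtain ⟨n₀, hn₀⟩ := T.exists_nat_subset_range
  refine eventually_atTop.2 ⟨n₀, fun n hn => (prod_range_one_sub_le_pow hv0 hv1 ?_ hT).trans_lt hm⟩
  exact hn₀.trans (range_subset_range.2 hn)

theorem hasSum_stickBreaking_of_frequently {ε : ℝ} (hε : 0 < ε)
    (hfreq : ∃ᶠ k in atTop, ε ≤ v k) : HasSum (stickBreaking v) 1 := by
  have hw : ∀ k, 0 ≤ stickBreaking v k := fun k =>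
    mul_nonneg (hv0 k) (prod_nonneg fun l _ => sub_nonneg.2 (hv1 l))
  rw [hasSum_iff_tendsto_nat_of_nonneg hw]
  simp_rw [sum_range_stickBreaking]
  simpa using tendsto_const_nhds.sub
    (tendsto_prod_range_one_sub_of_frequently hv0 hv1 hε hfreq)

end UnitInterval

theorem exists_pos_measure_setOf_le {Ω : Type*} [MeasurableSpace Ω] {μ : Measure Ω}
    {f : Ω → ℝ} (h : 0 < μ {ω | 0 < f ω}) : ∃ ε > 0, 0 < μ {ω | ε ≤ f ω} := by
  have hcover : {ω | 0 < f ω} ⊆ ⋃ n : ℕ, {ω | 1 / ((n : ℝ) + 1) ≤ f ω} := fun ω hω =>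
    Set.mem_iUnion.2 ((exists_nat_one_div_lt (show 0 < f ω from hω)).imp fun _ hn => hn.le)
  obtain ⟨n, hn⟩ := exists_measure_pos_of_not_measure_iUnion_null
    (h.trans_le (measure_mono hcover)).ne'
  exact ⟨_, Nat.one_div_pos_of_nat, hn⟩

theorem ae_frequently_mem_of_iIndepSet {Ω : Type*} [MeasurableSpace Ω] {μ : Measure Ω}
    {s : ℕ → Set Ω} (hsm : ∀ n, MeasurableSet (s n)) (hs : iIndepSet s μ)
    (hsum : ∑' n, μ (s n) = ⊤) : ∀ᵐ ω ∂μ, ∃ᶠ n in atTop, ω ∈ s n := by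
  have : IsProbabilityMeasure μ := hs.isProbabilityMeasure
  simp_rw [← mem_limsup_iff_frequently_mem]
  rw [ae_mem_iff_measure_eq (MeasurableSet.measurableSet_limsup hsm).nullMeasurableSet,
    measure_limsup_eq_one hsm hs hsum, measure_univ]

theorem ProbabilityTheory.iIndepFun.iIndepSet_preimage {Ω ι β : Type*} [MeasurableSpace Ω] [MeasurableSpace β]
    {μ : Measure Ω} {f : ι → Ω → β} (hf : ∀ i, Measurable (f i)) (h : iIndepFun f μ)
    {t : Set β} (ht : MeasurableSet t) : iIndepSet (fun i => f i ⁻¹' t) μ := by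
  rw [iIndepSet_iff_meas_biInter fun i => hf i ht]
  exact fun S => h.measure_inter_preimage_eq_mul S fun _ _ => ht

theorem ProbabilityTheory.iIndepFun.ae_frequently_mem {Ω β : Type*} [MeasurableSpace Ω] [MeasurableSpace β]
    {μ : Measure Ω} {f : ℕ → Ω → β} (hf : ∀ i, Measurable (f i)) (h : iIndepFun f μ)
    (hident : ∀ i, μ.map (f i) = μ.map (f 0)) {t : Set β} (ht : MeasurableSet t)
    (hpos : 0 < μ (f 0 ⁻¹' t)) : ∀ᵐ ω ∂μ, ∃ᶠ i in atTop, f i ω ∈ t := by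
  have hμ : ∀ i, μ (f i ⁻¹' t) = μ (f 0 ⁻¹' t) := fun i => by
    rw [← Measure.map_apply (hf i) ht, hident i, Measure.map_apply (hf 0) ht]
  refine ae_frequently_mem_of_iIndepSet (fun i => hf i ht) (h.iIndepSet_preimage hf ht) ?_
  exact (tsum_congr hμ).trans (ENNReal.tsum_const_eq_top_of_ne_zero hpos.ne')

/-- **Almost-sure validity of random stick-breaking weights.**  If `(v k)` are
independent, identically distributed `[0,1]`-valued random variables with
`μ(v₀ > 0) > 0`, then for `μ`-almost every `ω` the stick-breaking weights
`w k ω = v k ω · ∏_{l < k} (1 − v l ω)` sum to `1`.  This underlies the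
square-breaking representation of the enriched dependent Dirichlet process, where the
`v_k^φ` are i.i.d. `Beta(1, α_φ)` random variables, so that the random weights
almost surely form a probability vector. -/
theorem stick_breaking_random_weights_hasSum
    {Ω : Type*} [MeasurableSpace Ω]
    (μ : Measure Ω) [IsProbabilityMeasure μ]
    (v : ℕ → Ω → ℝ)
    (hmeas : ∀ k, Measurable (v k))
    (hv0 : ∀ k ω, 0 ≤ v k ω) (hv1 : ∀ k ω, v k ω ≤ 1)
    (hindep : iIndepFun v μ)
    (hident : ∀ k, Measure.map (v k) μ = Measure.map (v 0) μ)
    (hpos : 0 < μ {ω | 0 < v 0 ω}) :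
    ∀ᵐ ω ∂μ, HasSum (fun k => v k ω * ∏ l ∈ Finset.range k, (1 - v l ω)) 1 := by
  obtain ⟨ε, hε, hμε⟩ := exists_pos_measure_setOf_le hpos
  filter_upwards [hindep.ae_frequently_mem hmeas hident measurableSet_Ici hμε] with ω hω
  exact hasSum_stickBreaking_of_frequently (hv0 · ω) (hv1 · ω) hε hω
end
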